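/- Dual/ratio formulation lower bound: for any operators A, B ≥ 0 such that Tr(Aσ) ≤ Tr(Bσ) for all σ ∈ F, and any state ρ with Tr(Bρ) > 0, the projective robustness satisfies Ω(ρ) ≥ Tr(Aρ)/Tr(Bρ). -/

import Mathlib

/-! For states `ρ, σ` and any constants with `ρ ≤ λσ` and `σ ≤ μρ`, positivity of `A` and `B`
gives `Tr(Aρ) ≤ λ Tr(Aσ) ≤ λ Tr(Bσ) ≤ λμ Tr(Bρ)`, so `λμ ≥ Tr(Aρ)/Tr(Bρ)` for every feasible pair.
Taking traces shows both max-relative entropies between states are at least `1`, so no `0 · ∞`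
occurs and the bound passes to the product of the two infima. -/

open scoped ENNReal NNReal ComplexOrder
open Matrix

variable {ι κ : Type*}

/-- Max-relative entropy (non-logarithmic): `inf { λ ≥ 0 : ρ ≤ λσ }`, with `inf ∅ = ∞`.
Here `A ≤ B` means `B - A` is positive semidefinite. -/
noncomputable def Rmax [Fintype ι] (ρ σ : Matrix ι ι ℂ) : ℝ≥0∞ :=
  sInf {x : ℝ≥0∞ | ∃ l : ℝ≥0, x = (l : ℝ≥0∞) ∧ ((l : ℝ) • σ - ρ).PosSemidef}

/-- A state: positive semidefinite with unit trace. -/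
def IsState [Fintype ι] (ρ : Matrix ι ι ℂ) : Prop :=
  ρ.PosSemidef ∧ ρ.trace = 1

/-- A pure state: a rank-one (idempotent) state. -/
def IsPure [Fintype ι] (φ : Matrix ι ι ℂ) : Prop :=
  φ.PosSemidef ∧ φ * φ = φ ∧ φ.trace = 1

/-- The cone generated by a set of states. -/
noncomputable def cone (F : Set (Matrix ι ι ℂ)) : Set (Matrix ι ι ℂ) :=
  {x | ∃ (l : ℝ≥0) (σ : Matrix ι ι ℂ), σ ∈ F ∧ x = (l : ℝ) • σ}

/-- Projective robustness `Ω(ρ) = inf_{σ ∈ F} Rmax(ρ‖σ) Rmax(σ‖ρ)`. -/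
noncomputable def Omega [Fintype ι] (F : Set (Matrix ι ι ℂ)) (ρ : Matrix ι ι ℂ) : ℝ≥0∞ :=
  ⨅ σ ∈ F, Rmax ρ σ * Rmax σ ρ

/-- Support of an operator, as the range of the associated linear map. -/
noncomputable def msupport [Fintype ι] (ρ : Matrix ι ι ℂ) : Submodule ℂ (ι → ℂ) :=
  LinearMap.range ρ.mulVecLin

/-- A positive linear map on matrices. -/
def IsPosMap [Fintype ι] [Fintype κ] (E : Matrix ι ι ℂ →ₗ[ℂ] Matrix κ κ ℂ) : Prop :=
  ∀ ρ, ρ.PosSemidef → (E ρ).PosSemidef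

/-- Maximal fidelity with the free set: `F_F(φ) = max_{σ ∈ F} ⟨φ|σ|φ⟩ = max_{σ ∈ F} Tr(φσ)`. -/
noncomputable def Ffree [Fintype ι] (F : Set (Matrix ι ι ℂ)) (φ : Matrix ι ι ℂ) : ℝ :=
  sSup {x : ℝ | ∃ σ ∈ F, x = ((φ * σ).trace).re}

open scoped MatrixOrder in
theorem Matrix.PosSemidef.trace_mul_nonneg {n 𝕜 : Type*} [Fintype n] [RCLike 𝕜]
    {A X : Matrix n n 𝕜} (hA : A.PosSemidef) (hX : X.PosSemidef) : 0 ≤ (A * X).trace := by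
  classical
  obtain ⟨S, rfl⟩ := CStarAlgebra.nonneg_iff_eq_star_mul_self.mp hA.nonneg
  rw [star_eq_conjTranspose, Matrix.mul_assoc, trace_mul_comm]
  exact (hX.mul_mul_conjTranspose_same S).trace_nonneg

theorem Matrix.PosSemidef.re_trace_mul_le_of_posSemidef_sub {n : Type*} [Fintype n]
    {A X Y : Matrix n n ℂ} (hA : A.PosSemidef) (hXY : (Y - X).PosSemidef) :
    (A * X).trace.re ≤ (A * Y).trace.re := by
  have := (Complex.nonneg_iff.mp (hA.trace_mul_nonneg hXY)).1
  rwa [Matrix.mul_sub, trace_sub, Complex.sub_re, sub_nonneg] at this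

theorem ENNReal.le_sInf_mul_sInf {S T : Set ℝ≥0∞} {c : ℝ≥0∞} (hS : sInf S ≠ 0)
    (hT : sInf T ≠ 0) (h : ∀ s ∈ S, ∀ t ∈ T, c ≤ s * t) : c ≤ sInf S * sInf T := by
  rw [← ENNReal.div_le_iff_le_mul (.inl hT) (.inr hS)]
  refine le_sInf fun s hs ↦ ?_
  have hs0 : s ≠ 0 := ne_bot_of_le_ne_bot hS (sInf_le hs)
  rw [ENNReal.div_le_iff_le_mul (.inl hT) (.inr hs0), mul_comm,
    ← ENNReal.div_le_iff_le_mul (.inl hs0) (.inr hT)]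
  refine le_sInf fun t ht ↦ ?_
  rw [ENNReal.div_le_iff_le_mul (.inl hs0) (.inr (ne_bot_of_le_ne_bot hT (sInf_le ht))),
    mul_comm]
  exact h s hs t ht

theorem one_le_Rmax [Fintype ι] {ρ σ : Matrix ι ι ℂ} (hρ : IsState ρ) (hσ : IsState σ) :
    1 ≤ Rmax ρ σ := by
  refine le_sInf ?_
  rintro _ ⟨l, rfl, hl⟩
  have := (Complex.nonneg_iff.mp hl.trace_nonneg).1
  simp only [trace_sub, trace_smul, hρ.2, hσ.2, Complex.sub_re, Complex.real_smul,
    Complex.mul_re, Complex.ofReal_re, Complex.ofReal_im, Complex.one_re, Complex.one_im] at this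
  exact_mod_cast (by linarith : (1 : ℝ) ≤ l)

theorem re_trace_mul_le_mul_mul_of_sandwich [Fintype ι] {A B ρ σ : Matrix ι ι ℂ}
    (hA : A.PosSemidef) (hB : B.PosSemidef) (hAB : (A * σ).trace.re ≤ (B * σ).trace.re)
    {l m : ℝ} (hl : 0 ≤ l) (hρσ : (l • σ - ρ).PosSemidef) (hσρ : (m • ρ - σ).PosSemidef) :
    (A * ρ).trace.re ≤ l * m * (B * ρ).trace.re := by
  have hρ := hA.re_trace_mul_le_of_posSemidef_sub hρσ
  have hσ := hB.re_trace_mul_le_of_posSemidef_sub hσρ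
  simp only [Matrix.mul_smul, trace_smul, Complex.real_smul, Complex.re_ofReal_mul] at hρ hσ
  calc (A * ρ).trace.re ≤ l * (A * σ).trace.re := hρ
    _ ≤ l * (B * σ).trace.re := by gcongr
    _ ≤ l * (m * (B * ρ).trace.re) := by gcongr
    _ = l * m * (B * ρ).trace.re := by ring

theorem omega_dual_ratio_lower_bound_general [Fintype ι]
    (F : Set (Matrix ι ι ℂ)) (hFstate : ∀ σ ∈ F, IsState σ)
    (A B : Matrix ι ι ℂ) (hA : A.PosSemidef) (hB : B.PosSemidef)
    (hAB : ∀ σ ∈ F, ((A * σ).trace).re ≤ ((B * σ).trace).re)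
    (ρ : Matrix ι ι ℂ) (hρ : IsState ρ) (hBρ : 0 < ((B * ρ).trace).re) :
    ENNReal.ofReal (((A * ρ).trace).re / ((B * ρ).trace).re) ≤ Omega F ρ := by
  refine le_iInf₂ fun σ hσ ↦ ?_
  refine ENNReal.le_sInf_mul_sInf (zero_lt_one.trans_le (one_le_Rmax hρ (hFstate σ hσ))).ne'
    (zero_lt_one.trans_le (one_le_Rmax (hFstate σ hσ) hρ)).ne' ?_
  rintro _ ⟨l, rfl, hl⟩ _ ⟨m, rfl, hm⟩
  rw [← ENNReal.coe_mul, ← ENNReal.ofReal_coe_nnreal, NNReal.coe_mul]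
  refine ENNReal.ofReal_le_ofReal ((div_le_iff₀ hBρ).mpr ?_)
  exact re_trace_mul_le_mul_mul_of_sandwich hA hB (hAB σ hσ) l.2 hl hm

/-- dual/ratio lower bound: if `A, B ≥ 0` satisfy `Tr(Aσ) ≤ Tr(Bσ)` for all
`σ ∈ F`, then `Ω(ρ) ≥ Tr(Aρ)/Tr(Bρ)` whenever `Tr(Bρ) > 0`. -/
theorem omega_dual_ratio_lower_bound [Fintype ι] [DecidableEq ι]
    (F : Set (Matrix ι ι ℂ)) (hFne : F.Nonempty) (hFcpt : IsCompact F)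
    (hFconv : Convex ℝ F) (hFstate : ∀ σ ∈ F, IsState σ)
    (A B : Matrix ι ι ℂ) (hA : A.PosSemidef) (hB : B.PosSemidef)
    (hAB : ∀ σ ∈ F, ((A * σ).trace).re ≤ ((B * σ).trace).re)
    (ρ : Matrix ι ι ℂ) (hρ : IsState ρ) (hBρ : 0 < ((B * ρ).trace).re) :
    ENNReal.ofReal (((A * ρ).trace).re / ((B * ρ).trace).re) ≤ Omega F ρ :=
  omega_dual_ratio_lower_bound_general F hFstate A B hA hB hAB ρ hρ hBρ
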